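/- arXiv:1611.01892 — 7 statements merged into one kernel-verified Lean document; each statement's English description precedes it below -/
import Mathlib

section
/- For any permutation τ of {1,...,d}, aex(γτ⁻¹) + aex(τ) = d + 1, where γ = (1 2 ... d) is the full forward cycle. -/
/-- The number of antiexceedances of a permutation: indices `i` with `π i ≤ i`. -/
def aex {d : ℕ} (π : Equiv.Perm (Fin d)) : ℕ :=
  (Finset.univ.filter (fun i => π i ≤ i)).card

/-- For any permutation `τ` of `{1,…,d}`, `aex (γ τ⁻¹) + aex τ = d + 1`,
where `γ = (1 2 … d)` is the full forward cycle. -/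
theorem aex_rotate_add_aex (d : ℕ) (hd : 0 < d) (τ : Equiv.Perm (Fin d)) :
    aex (finRotate d * τ⁻¹) + aex τ = d + 1 := by
  obtain ⟨n, rfl⟩ : ∃ n, d = n + 1 := ⟨d - 1, by omega⟩
  have h1 : aex (finRotate (n+1) * τ⁻¹) =
      (Finset.univ.filter (fun j => finRotate (n+1) j ≤ τ j)).card := by
    unfold aex
    apply Finset.card_bij (fun i _ => τ⁻¹ i)
    · intro a ha
      simp only [Finset.mem_filter, Finset.mem_univ, true_and,
        Equiv.Perm.mul_apply] at *
      simpa using ha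
    · intro a _ b _ h
      exact τ⁻¹.injective h
    · intro b hb
      refine ⟨τ b, ?_, by simp⟩
      simp only [Finset.mem_filter, Finset.mem_univ, true_and,
        Equiv.Perm.mul_apply] at *
      simpa using hb
  rw [h1]
  unfold aex
  set A := Finset.univ.filter (fun j => finRotate (n+1) j ≤ τ j) with hA
  set B := Finset.univ.filter (fun j : Fin (n+1) => τ j ≤ j) with hB
  have hu : A ∪ B = Finset.univ := by
    ext j
    simp only [hA, hB, Finset.mem_union, Finset.mem_filter, Finset.mem_univ,
      true_and, iff_true]
    by_cases h : τ j ≤ j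
    · right; exact h
    · left
      push_neg at h
      rw [Fin.le_def, finRotate_succ_apply, Fin.val_add_one]
      split
      · exact Nat.zero_le _
      · exact h
  have hi : A ∩ B = {Fin.last n} := by
    ext j
    simp only [hA, hB, Finset.mem_inter, Finset.mem_filter, Finset.mem_univ,
      true_and, Finset.mem_singleton]
    constructor
    · rintro ⟨h1, h2⟩
      by_contra hne
      have := h1.trans h2
      rw [Fin.le_def, finRotate_succ_apply, Fin.val_add_one] at this
      rw [if_neg hne] at this
      omega
    · rintro rfl
      constructor
      · rw [Fin.le_def, finRotate_succ_apply, Fin.val_add_one, if_pos rfl]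
        exact Nat.zero_le _
      · exact Fin.le_last _
  have hc := Finset.card_union_add_card_inter A B
  rw [hu, hi] at hc
  simp only [Finset.card_univ, Fintype.card_fin, Finset.card_singleton] at hc
  omega
end

section
/- For any permutations σ, τ of {1,...,d}, aex(σ) − aex(τ) ≤ |σ⁻¹τ|, where |π| denotes the minimal number of transpositions whose product is π. -/
/-- The number of cycles of a permutation, counting fixed points. -/
def cyc {d : ℕ} (π : Equiv.Perm (Fin d)) : ℕ :=
  π.cycleType.card + (d - π.support.card)

/-- The word length of `π` with respect to all transpositions: `d - cyc π`. -/
def len {d : ℕ} (π : Equiv.Perm (Fin d)) : ℕ := d - cyc π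

/-!
Write `σ⁻¹ * τ` as a product of `len (σ⁻¹ * τ)` transpositions (a cycle of length `k` is a product
of `k - 1` of them). Multiplying on the right by a transposition `swap a b` changes the values only
at `a` and `b`, and it cannot destroy both antiexceedances there, so `aex` drops by at most one at
each of the steps leading from `σ` to `τ`.
-/

open Equiv Equiv.Perm Finset

namespace Equiv.Perm

variable {α : Type*} [Fintype α] [DecidableEq α]

theorem IsCycle.exists_isSwap_list_prod_eq {c : Perm α} (hc : c.IsCycle) :
    ∃ l : List (Perm α), (∀ t ∈ l, t.IsSwap) ∧ l.prod = c ∧ l.length + 1 = #c.support := by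
  obtain ⟨x, hx, -⟩ := id hc
  by_cases hcx : c (c x) = x
  · refine ⟨[c], by simpa using ⟨x, c x, Ne.symm hx, hc.eq_swap_of_apply_apply_eq_self hx hcx⟩,
      by simp, ?_⟩
    rw [hc.eq_swap_of_apply_apply_eq_self hx hcx, card_support_swap (Ne.symm hx)]
    rfl
  · -- `swap x (c x) * c` is the cycle `c` with `x` cut out
    have : #(swap x (c x) * c).support < #c.support := card_support_swap_mul hx
    obtain ⟨l, hl_swap, hl_prod, hl_length⟩ := (hc.swap_mul hx hcx).exists_isSwap_list_prod_eq
    refine ⟨swap x (c x) :: l, ?_, ?_, ?_⟩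
    · simpa using ⟨⟨x, c x, Ne.symm hx, rfl⟩, hl_swap⟩
    · rw [List.prod_cons, hl_prod, ← mul_assoc, swap_mul_self, one_mul]
    · rw [List.length_cons, hl_length, support_swap_mul_eq c x hcx, sdiff_singleton_eq_erase,
        card_erase_of_mem (mem_support.2 hx)]
      have := hc.two_le_card_support
      omega
termination_by #c.support

theorem exists_isSwap_list_prod_eq (π : Perm α) :
    ∃ l : List (Perm α), (∀ t ∈ l, t.IsSwap) ∧ l.prod = π ∧
      l.length + Multiset.card π.cycleType = #π.support := by
  induction π using cycle_induction_on with
  | base_one => exact ⟨[], by simp, by simp, by simp⟩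
  | base_cycles c hc =>
    simpa [hc.cycleType] using hc.exists_isSwap_list_prod_eq
  | induction_disjoint f g hfg _ hf hg =>
    obtain ⟨lf, hlf_swap, hlf_prod, hlf_length⟩ := hf
    obtain ⟨lg, hlg_swap, hlg_prod, hlg_length⟩ := hg
    refine ⟨lf ++ lg, ?_, by rw [List.prod_append, hlf_prod, hlg_prod], ?_⟩
    · simpa using fun t ht => ht.elim (hlf_swap t) (hlg_swap t)
    · rw [List.length_append, hfg.cycleType_mul, hfg.card_support_mul, Multiset.card_add]
      omega

end Equiv.Perm

theorem exists_isSwap_list_length_eq_len {d : ℕ} (π : Perm (Fin d)) :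
    ∃ l : List (Perm (Fin d)), (∀ t ∈ l, t.IsSwap) ∧ l.prod = π ∧ l.length = len π := by
  obtain ⟨l, hl_swap, hl_prod, hl_length⟩ := π.exists_isSwap_list_prod_eq
  have : #π.support ≤ d := by simpa using card_le_univ π.support
  exact ⟨l, hl_swap, hl_prod, by simp only [len, cyc]; omega⟩

theorem aex_le_aex_mul_swap_add_one {d : ℕ} (π : Perm (Fin d)) (a b : Fin d) :
    aex π ≤ aex (π * swap a b) + 1 := by
  set A := univ.filter fun i => π i ≤ i
  set B := univ.filter fun i => π (swap a b i) ≤ i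
  -- at most one of `a`, `b` can lose its antiexceedance: losing both forces `a < b < a`
  have hcover : A ⊆ insert a B ∨ A ⊆ insert b B := by
    by_contra! h
    obtain ⟨i, hiA, hi⟩ := not_subset.1 h.1
    obtain ⟨j, hjA, hj⟩ := not_subset.1 h.2
    simp only [A, B, mem_insert, mem_filter, mem_univ, true_and, not_or, not_le] at hiA hjA hi hj
    have hib : i = b := by
      by_contra hib
      rw [swap_apply_of_ne_of_ne hi.1 hib] at hi
      exact hi.2.not_ge hiA
    have hja : j = a := by
      by_contra hja
      rw [swap_apply_of_ne_of_ne hja hj.1] at hj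
      exact hj.2.not_ge hjA
    subst hib hja
    rw [swap_apply_right] at hi
    rw [swap_apply_left] at hj
    exact (hj.2.trans_le hiA).not_ge (hi.2.trans_le hjA).le
  show #A ≤ #B + 1
  rcases hcover with h | h <;> exact (card_le_card h).trans (card_insert_le _ _)

theorem aex_le_aex_mul_list_prod_add_length {d : ℕ} (σ : Perm (Fin d)) {l : List (Perm (Fin d))}
    (hl : ∀ t ∈ l, t.IsSwap) : aex σ ≤ aex (σ * l.prod) + l.length := by
  induction l generalizing σ with
  | nil => simp
  | cons t l ih =>
    obtain ⟨a, b, -, rfl⟩ := hl t List.mem_cons_self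
    have hstep := aex_le_aex_mul_swap_add_one σ a b
    have hrest := ih (σ * swap a b) fun t ht => hl t (List.mem_cons_of_mem _ ht)
    rw [List.prod_cons, ← mul_assoc, List.length_cons]
    omega

theorem aex_sub_aex_le_len (d : ℕ) (σ τ : Equiv.Perm (Fin d)) :
    (aex σ : ℤ) - aex τ ≤ len (σ⁻¹ * τ) := by
  obtain ⟨l, hl_swap, hl_prod, hl_length⟩ := exists_isSwap_list_length_eq_len (σ⁻¹ * τ)
  have h := aex_le_aex_mul_list_prod_add_length σ hl_swap
  rw [hl_prod, mul_inv_cancel_left, hl_length] at h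
  omega
end

section
/- For any permutations π₁, π₂ of {1,...,d}, defect(π₁) + defect(π₂⁻¹γ) ≤ 2·genus(π₁, π₁⁻¹π₂, π₂⁻¹γ), where γ = (1 2 ... d). -/
/-- The defect statistic `aex(π) - cyc(π)`. -/
def defect {d : ℕ} (π : Equiv.Perm (Fin d)) : ℤ := (aex π : ℤ) - cyc π

/-- The genus of a triple of permutations. -/
def genus {d : ℕ} (ρ₁ ρ₂ ρ₃ : Equiv.Perm (Fin d)) : ℤ :=
  ((len ρ₁ + len ρ₂ + len ρ₃ : ℤ) - len (ρ₁ * ρ₂ * ρ₃)) / 2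


/-!
Write `A = π₁`, `B = π₁⁻¹ π₂`, `C = π₂⁻¹ γ`, so that `A B C = γ`. Two facts about
antiexceedances give the bound.

* `aex σ + aex (σ⁻¹ γ) = d + 1`: substituting `j = σ⁻¹ (γ i)`, the antiexceedances of `σ⁻¹ γ`
  become the strict excedances `j < σ j` of `σ` together with the point `σ⁻¹ 0`.
* `aex (ρ σ) ≤ aex σ + |ρ|`: if `i` is an antiexceedance of `ρ σ` but not of `σ`, then `σ i` is a
  strict antiexceedance of `ρ`, and `ρ` has at most `d - cyc ρ` of these because the least
  element of every cycle is a weak excedance.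

With `ρ = B⁻¹` and `σ = A⁻¹ γ` this gives `aex A + aex C ≤ d + 1 + |B|`; since `cyc = d - |·|`
and `|γ| = d - 1`, this is the claim, the genus being an integer because `sign` is
multiplicative.
-/

open Equiv Finset

section Cycles

variable {d : ℕ}

theorem cyc_eq_card_cycleFactorsFinset_add_card_fixed (ρ : Perm (Fin d)) :
    cyc ρ = #ρ.cycleFactorsFinset + #{j | ρ j = j} := by
  have := card_filter_add_card_filter_not (s := univ) (fun j => ρ j ≠ j)
  simp only [not_not, card_univ, Fintype.card_fin] at this
  rw [cyc, Perm.cycleType_def, Multiset.card_map, Perm.support]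
  simp only [card_val]
  omega

theorem card_cycleFactorsFinset_le_card_lt_apply (ρ : Perm (Fin d)) :
    #ρ.cycleFactorsFinset ≤ #{j | j < ρ j} := by
  classical
  refine card_le_card_of_surjOn ρ.cycleOf fun c hc => ?_
  have hc' := Perm.mem_cycleFactorsFinset_iff.mp hc
  obtain ⟨j, hj, hmin⟩ := c.support.exists_min_image id hc'.1.nonempty_support
  refine ⟨j, ?_, (Perm.cycle_is_cycleOf hj hc).symm⟩
  simp only [coe_filter, mem_univ, true_and, Set.mem_ofPred_eq]
  rw [← hc'.2 j hj]
  exact lt_of_le_of_ne (hmin _ (Perm.apply_mem_support.mpr hj)) (Perm.mem_support.mp hj).symm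

theorem cyc_le_card_le_apply (ρ : Perm (Fin d)) : cyc ρ ≤ #{j | j ≤ ρ j} := by
  rw [cyc_eq_card_cycleFactorsFinset_add_card_fixed,
    ← card_filter_add_card_filter_not (s := {j | j ≤ ρ j}) (fun j => j < ρ j), filter_filter,
    filter_filter]
  gcongr ?_ + ?_
  · exact (card_cycleFactorsFinset_le_card_lt_apply ρ).trans
      (card_le_card fun j => by simp +contextual [le_of_lt])
  · exact card_le_card fun j => by simp +contextual

theorem len_add_cyc (ρ : Perm (Fin d)) : len ρ + cyc ρ = d := by
  have := (cyc_le_card_le_apply ρ).trans (card_le_univ _)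
  rw [Fintype.card_fin] at this
  unfold len
  omega

theorem len_inv (ρ : Perm (Fin d)) : len ρ⁻¹ = len ρ := by
  simp only [len, cyc, Perm.cycleType_inv, Perm.support_inv]

theorem sign_eq_neg_one_pow_len (ρ : Perm (Fin d)) : Perm.sign ρ = (-1) ^ len ρ := by
  have hexp : ρ.cycleType.sum + ρ.cycleType.card = len ρ + 2 * ρ.cycleType.card := by
    have := len_add_cyc ρ
    have := ρ.support.card_le_univ
    rw [Fintype.card_fin] at this
    rw [Perm.sum_cycleType]
    unfold cyc at *
    omega
  rw [Perm.sign_of_cycleType, hexp, pow_add, pow_mul, Int.units_sq, one_pow, mul_one]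

theorem two_mul_genus (ρ₁ ρ₂ ρ₃ : Perm (Fin d)) :
    2 * genus ρ₁ ρ₂ ρ₃ = len ρ₁ + len ρ₂ + len ρ₃ - len (ρ₁ * ρ₂ * ρ₃) := by
  have hsign : (-1 : ℤˣ) ^ (len ρ₁ + len ρ₂ + len ρ₃) = (-1) ^ len (ρ₁ * ρ₂ * ρ₃) := by
    simp only [pow_add, ← sign_eq_neg_one_pow_len, map_mul]
  obtain ⟨k, hk⟩ : Even (len ρ₁ + len ρ₂ + len ρ₃ + len (ρ₁ * ρ₂ * ρ₃)) := by
    rw [← neg_one_pow_eq_one_iff_even (R := ℤˣ) (by decide), pow_add, hsign, ← pow_add, ← two_mul,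
      pow_mul, Int.units_sq, one_pow]
  rw [genus, Int.mul_ediv_cancel']
  exact ⟨k - len (ρ₁ * ρ₂ * ρ₃), by omega⟩

end Cycles

section Antiexceedances

variable {d : ℕ}

theorem aex_add_card_lt_apply (π : Perm (Fin d)) : aex π + #{i | i < π i} = d := by
  simpa [aex, not_le] using card_filter_add_card_filter_not (s := univ) (fun i => π i ≤ i)

theorem aex_eq_card_le_inv_apply (π : Perm (Fin d)) : aex π = #{j | j ≤ π⁻¹ j} :=
  card_nbij' π (⇑π⁻¹) (by intro i; simp) (by intro i; simp) (by intro i; simp) (by intro i; simp)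

theorem card_apply_lt_le_len (ρ : Perm (Fin d)) : #{j | ρ j < j} ≤ len ρ := by
  have := card_filter_add_card_filter_not (s := univ) (fun j => ρ j < j)
  simp only [not_lt, card_univ, Fintype.card_fin] at this
  have := cyc_le_card_le_apply ρ
  have := len_add_cyc ρ
  omega

theorem aex_mul_le_aex_add_len (ρ σ : Perm (Fin d)) : aex (ρ * σ) ≤ aex σ + len ρ := by
  have hsub : univ.filter (fun i => (ρ * σ) i ≤ i) ⊆
      univ.filter (fun i => σ i ≤ i) ∪ univ.filter (fun i => ρ (σ i) ≤ i ∧ i < σ i) := by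
    intro i hi
    rw [mem_filter, Perm.mul_apply] at hi
    simp only [mem_union, mem_filter, mem_univ, true_and]
    exact (le_or_gt (σ i) i).imp_right fun h => ⟨hi.2, h⟩
  have hinj : #{i | ρ (σ i) ≤ i ∧ i < σ i} ≤ #{j | ρ j < j} :=
    card_le_card_of_injOn σ (fun i hi => by
      simp only [coe_filter, Set.mem_ofPred_eq, mem_univ, true_and] at hi ⊢
      exact hi.1.trans_lt hi.2) σ.injective.injOn
  calc aex (ρ * σ) ≤ aex σ + #{i | ρ (σ i) ≤ i ∧ i < σ i} :=
        (card_le_card hsub).trans (card_union_le _ _)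
    _ ≤ aex σ + len ρ := by have := card_apply_lt_le_len ρ; omega

end Antiexceedances

section Rotation

theorem Fin.le_sub_one_iff_eq_zero_or_lt {m : ℕ} {j k : Fin (m + 1)} :
    j ≤ k - 1 ↔ k = 0 ∨ j < k := by
  rcases eq_or_ne k 0 with rfl | hk
  · simpa [← Fin.neg_last] using Fin.le_last j
  · rw [Fin.le_def, Fin.lt_def, Fin.val_sub_one_of_ne_zero hk]
    have := Fin.pos_iff_ne_zero.mpr hk
    simp only [hk, false_or]
    omega

theorem aex_inv_mul_finRotate {m : ℕ} (σ : Perm (Fin (m + 1))) :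
    aex (σ⁻¹ * finRotate (m + 1)) = #{j | j < σ j} + 1 := by
  have hset : ({j | j ≤ (σ⁻¹ * finRotate (m + 1))⁻¹ j} : Finset _) =
      insert (σ⁻¹ 0) (univ.filter fun j => j < σ j) := by
    ext j
    simp [Fin.le_sub_one_iff_eq_zero_or_lt, Equiv.eq_symm_apply]
  rw [aex_eq_card_le_inv_apply, hset, card_insert_of_notMem (by simp)]

theorem aex_add_aex_inv_mul_finRotate {m : ℕ} (σ : Perm (Fin (m + 1))) :
    aex σ + aex (σ⁻¹ * finRotate (m + 1)) = m + 2 := by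
  have := aex_add_card_lt_apply σ
  rw [aex_inv_mul_finRotate]
  omega

theorem cyc_finRotate (m : ℕ) : cyc (finRotate (m + 1)) = 1 := by
  rcases m with _ | m
  · rfl
  · simp [cyc, cycleType_finRotate, support_finRotate]

end Rotation

theorem defect_add_defect_le_two_genus (d : ℕ) (π₁ π₂ : Equiv.Perm (Fin d)) :
    defect π₁ + defect (π₂⁻¹ * finRotate d) ≤
      2 * genus π₁ (π₁⁻¹ * π₂) (π₂⁻¹ * finRotate d) := by
  rcases d with _ | m
  · obtain rfl := Subsingleton.elim π₁ 1
    obtain rfl := Subsingleton.elim π₂ 1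
    simp [defect, genus, len, cyc, aex]
  set γ := finRotate (m + 1)
  have hγ : len γ = m := by have := len_add_cyc γ; rw [cyc_finRotate] at this; omega
  have haex : aex π₁ + aex (π₂⁻¹ * γ) ≤ m + 2 + len (π₁⁻¹ * π₂) := by
    have h1 : aex π₁ + aex (π₁⁻¹ * γ) = m + 2 := aex_add_aex_inv_mul_finRotate π₁
    have h2 := aex_mul_le_aex_add_len (π₁⁻¹ * π₂)⁻¹ (π₁⁻¹ * γ)
    rw [len_inv, show (π₁⁻¹ * π₂)⁻¹ * (π₁⁻¹ * γ) = π₂⁻¹ * γ by group] at h2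
    omega
  have := len_add_cyc π₁
  have := len_add_cyc (π₂⁻¹ * γ)
  rw [defect, defect, two_mul_genus, show π₁ * (π₁⁻¹ * π₂) * (π₂⁻¹ * γ) = γ by group, hγ]
  omega
end

section
/- Let π ∈ S_d and let τ = (j, j+1) be an adjacent transposition with 1 ≤ j < d and π(j) ≠ j+1 (a 'nice Coxeter conjugation'). Suppose neither j nor j+1 is a fixed point of π and π(j+1) ≠ j. Define π' on {1,...,d}∖{j+1} by π'(j) = π(j+1), π'(k) = π(j) if π(k) = j+1, and π'(k) = π(k) otherwise. Then the number of antiexceedances of π' is at most the number of antiexceedances of π. -/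
namespace Equiv.Perm

variable {α : Type*} [LinearOrder α] (σ : Perm α) (j j1 : α)

def contractAdjacent (k : α) : α :=
  if k = j then σ j1 else if σ k = j1 then σ j else σ k

def contractAdjacentWitness (k : α) : α :=
  if k = j then j1 else if σ k = j1 then (if k < j1 then j else k) else k

variable {σ j j1}

theorem contractAdjacentWitness_le (hj : j ⋖ j1) {k : α} (hle : contractAdjacent σ j j1 k ≤ k) :
    σ (contractAdjacentWitness σ j j1 k) ≤ contractAdjacentWitness σ j j1 k := by
  unfold contractAdjacent at hle
  unfold contractAdjacentWitness
  split_ifs at hle ⊢ with hkj hkm hlt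
  · exact (hkj ▸ hle).trans hj.le
  · exact hle.trans (hj.le_of_lt hlt)
  · exact hkm.trans_le (not_lt.mp hlt)
  · exact hle

theorem contractAdjacentWitness_injOn (hj : j ≠ j1) :
    Set.InjOn (contractAdjacentWitness σ j j1) {k | k ≠ j1} := by
  intro a ha b hb hab
  simp only [contractAdjacentWitness] at hab
  grind [σ.injective.eq_iff]

theorem card_contractAdjacent_le [Fintype α] (hj : j ⋖ j1) :
    ((Finset.univ.erase j1).filter (fun k => contractAdjacent σ j j1 k ≤ k)).card
      ≤ (Finset.univ.filter (fun k => σ k ≤ k)).card := by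
  refine Finset.card_le_card_of_injOn (contractAdjacentWitness σ j j1) ?_ ?_
  · intro k hk
    simp only [Finset.coe_filter, Finset.mem_erase] at hk
    simpa using contractAdjacentWitness_le hj hk.2
  · exact (contractAdjacentWitness_injOn hj.ne).mono fun k hk => by simp_all

end Equiv.Perm

theorem aex_pi'_le_general (d : ℕ) (π : Equiv.Perm (Fin d)) (j j1 : Fin d)
    (hj1 : (j1 : ℕ) = (j : ℕ) + 1) :
    ((Finset.univ.erase j1).filter
        (fun k => (if k = j then π j1 else if π k = j1 then π j else π k) ≤ k)).card
      ≤ aex π :=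
  π.card_contractAdjacent_le (Fin.covBy_iff.mpr (Nat.covBy_iff_add_one_eq.mpr hj1.symm))

/-- Given `π ∈ S_d` and `j` with `π(j) ≠ j+1`, neither `j` nor `j+1` a fixed
point, and `π(j+1) ≠ j`, the permutation `π'` of `{1,…,d}∖{j+1}` defined by
`π'(j) = π(j+1)`, `π'(k) = π(j)` when `π(k) = j+1`, and `π'(k) = π(k)`
otherwise, has at most as many antiexceedances as `π`. -/
theorem aex_pi'_le (d : ℕ) (π : Equiv.Perm (Fin d)) (j j1 : Fin d)
    (hj1 : (j1 : ℕ) = (j : ℕ) + 1)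
    (hnice : π j ≠ j1) (hfj : π j ≠ j) (hfj1 : π j1 ≠ j1) (h4 : π j1 ≠ j) :
    ((Finset.univ.erase j1).filter
        (fun k => (if k = j then π j1 else if π k = j1 then π j else π k) ≤ k)).card
      ≤ aex π :=
  aex_pi'_le_general d π j j1 hj1
end

section
/- Let π ∈ S_d, and let τ = (j, j+1) with π(j) ≠ j+1 and π(j+1) ≠ j, and suppose neither j nor j+1 is a fixed point of π. Define π'' on {1,...,d}∖{j} by π''(j+1) = π(j), π''(k) = π(j+1) if π(k) = j, and π''(k) = π(k) otherwise. Then aex(π'') ≤ aex(π). -/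
namespace Equiv.Perm

variable {d : ℕ} (π : Perm (Fin d)) (j j1 : Fin d)

/-- The paper's `π''`; its value at `j` plays no role. -/
def mergeAt (k : Fin d) : Fin d :=
  if k = j1 then π j else if π k = j then π j1 else π k

def aexTransfer : Perm (Fin d) :=
  if j ≤ π.symm j then swap j j1 else swap (π.symm j) j1 * swap j j1

variable {π j j1}

theorem aexTransfer_apply_right (hj : j ≠ j1) : π.aexTransfer j j1 j1 = j := by
  unfold aexTransfer
  split_ifs with h
  · exact swap_apply_right j j1
  · rw [Perm.mul_apply, swap_apply_right,
      swap_apply_of_ne_of_ne (fun h' => h h'.le) hj]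

theorem aexTransfer_apply_of_ne {k : Fin d} (hkj : k ≠ j) (hkj1 : k ≠ j1) (hk : π k ≠ j) :
    π.aexTransfer j j1 k = k := by
  have hkk0 : k ≠ π.symm j := fun h => hk (by rw [h, apply_symm_apply])
  unfold aexTransfer
  split_ifs
  · exact swap_apply_of_ne_of_ne hkj hkj1
  · rw [Perm.mul_apply, swap_apply_of_ne_of_ne hkj hkj1, swap_apply_of_ne_of_ne hkk0 hkj1]

theorem aexTransfer_apply_symm_of_le (hj : j ≤ π.symm j) (h0 : π.symm j ≠ j)
    (h1 : π.symm j ≠ j1) : π.aexTransfer j j1 (π.symm j) = π.symm j := by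
  rw [aexTransfer, if_pos hj, swap_apply_of_ne_of_ne h0 h1]

theorem aexTransfer_apply_symm_of_lt (hj : π.symm j < j) (hj1 : π.symm j ≠ j1) :
    π.aexTransfer j j1 (π.symm j) = j1 := by
  rw [aexTransfer, if_neg (not_le.2 hj), Perm.mul_apply,
    swap_apply_of_ne_of_ne hj.ne hj1, swap_apply_left]

theorem apply_aexTransfer_le (hj1 : (j1 : ℕ) = j + 1) (hnice : π j ≠ j1) {k : Fin d}
    (hkj : k ≠ j) (hk : π.mergeAt j j1 k ≤ k) :
    π (π.aexTransfer j j1 k) ≤ π.aexTransfer j j1 k := by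
  have hjj1 : j ≠ j1 := fun h => by rw [h] at hj1; omega
  unfold mergeAt at hk
  split_ifs at hk with hkj1 hπk
  · rw [hkj1] at hk ⊢
    have hnice' : (π j : ℕ) ≠ j1 := fun h => hnice (Fin.ext h)
    rw [aexTransfer_apply_right hjj1, Fin.le_def]
    rw [Fin.le_def] at hk
    omega
  · obtain rfl : k = π.symm j := (eq_symm_apply π).2 hπk
    rcases le_or_gt j (π.symm j) with hle | hlt
    · rw [aexTransfer_apply_symm_of_le hle hkj hkj1, hπk]
      exact hle
    · rw [aexTransfer_apply_symm_of_lt hlt hkj1]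
      rw [Fin.le_def, Fin.lt_def] at *
      omega
  · rwa [aexTransfer_apply_of_ne hkj hkj1 hπk]

end Equiv.Perm

theorem aex_pi''_le_general (d : ℕ) (π : Equiv.Perm (Fin d)) (j j1 : Fin d)
    (hj1 : (j1 : ℕ) = (j : ℕ) + 1)
    (hnice : π j ≠ j1) :
    ((Finset.univ.erase j).filter
        (fun k => (if k = j1 then π j else if π k = j then π j1 else π k) ≤ k)).card
      ≤ aex π := by
  refine Finset.card_le_card_of_injOn (π.aexTransfer j j1) (fun k hk => ?_)
    (π.aexTransfer j j1).injective.injOn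
  simp only [Finset.coe_filter, Finset.mem_erase, Finset.mem_univ, and_true,
    Set.mem_ofPred_eq] at hk
  simpa [aex] using Equiv.Perm.apply_aexTransfer_le hj1 hnice hk.1 hk.2

/-- Given `π ∈ S_d` and `j` with `π(j) ≠ j+1`, `π(j+1) ≠ j`, and neither `j`
nor `j+1` a fixed point, the permutation `π''` of `{1,…,d}∖{j}` defined by
`π''(j+1) = π(j)`, `π''(k) = π(j+1)` when `π(k) = j`, and `π''(k) = π(k)`
otherwise, has at most as many antiexceedances as `π`. -/
theorem aex_pi''_le (d : ℕ) (π : Equiv.Perm (Fin d)) (j j1 : Fin d)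
    (hj1 : (j1 : ℕ) = (j : ℕ) + 1)
    (hnice : π j ≠ j1) (h4 : π j1 ≠ j) (hfj : π j ≠ j) (hfj1 : π j1 ≠ j1) :
    ((Finset.univ.erase j).filter
        (fun k => (if k = j1 then π j else if π k = j then π j1 else π k) ≤ k)).card
      ≤ aex π :=
  aex_pi''_le_general d π j j1 hj1 hnice
end

section
/- Every permutation π of {1,...,d} consisting of a single d-cycle can be transformed into the full forward cycle (1 2 ... d) by a finite sequence of conjugations by adjacent transpositions τ = (j, j+1), where at each step the current permutation σ satisfies σ(j) ≠ j+1. -/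
/-!
A `d`-cycle is conjugate to `r = finRotate d`, and since the powers of `r` act transitively
the conjugator can be chosen to fix `0`: the cycle is `f⁻¹ r f` with `f 0 = 0`. While `f` is
not the identity it has an adjacent descent `f (j+1) < f j`, and replacing `f` by
`f ∘ (j, j+1)` is a conjugation step that makes `f` lexicographically smaller. The step is
nice because `r` only decreases at the wrap-around `last ↦ 0`, and `f (j+1) ≠ 0 = f 0`.
By well-foundedness of the lexicographic order the process ends at `f = 1`, i.e. at `r`.
-/

open Equiv Equiv.Perm Relation

/-- A nice Coxeter conjugation step: `σ' = τ σ τ⁻¹` for an adjacent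
transposition `τ = (j, j+1)` with `σ j ≠ j+1`. -/
def NiceStep {d : ℕ} (σ σ' : Equiv.Perm (Fin d)) : Prop :=
  ∃ j j1 : Fin d, (j1 : ℕ) = (j : ℕ) + 1 ∧ σ j ≠ j1 ∧
    σ' = Equiv.swap j j1 * σ * (Equiv.swap j j1)⁻¹

theorem IsConj.exists_conj_eq_of_isCycle {α : Type*} {σ τ : Perm α} (h : IsConj σ τ)
    (hτ : τ.IsCycle) (hτx : ∀ x, τ x ≠ x) (a b : α) :
    ∃ f : Perm α, f * σ * f⁻¹ = τ ∧ f a = b := by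
  obtain ⟨g, hg⟩ := isConj_iff.1 h
  obtain ⟨k, hk⟩ := hτ.exists_zpow_eq (hτx (g a)) (hτx b)
  refine ⟨τ ^ k * g, ?_, hk⟩
  calc τ ^ k * g * σ * (τ ^ k * g)⁻¹ = τ ^ k * (g * σ * g⁻¹) * (τ ^ k)⁻¹ := by group
    _ = τ := by rw [hg, (Commute.zpow_self τ k).eq, mul_inv_cancel_right]

theorem finRotate_eq_zero_of_lt {n : ℕ} {a : Fin (n + 1)} (h : finRotate (n + 1) a < a) :
    finRotate (n + 1) a = 0 := by
  have ha : a = Fin.last n := by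
    by_contra hne
    exact h.not_gt ((lt_finRotate_iff_ne_last a).2 hne)
  rw [ha, finRotate_last]

theorem niceStep_conj_finRotate_of_descent {n : ℕ} {f : Perm (Fin (n + 1))} (h0 : f 0 = 0)
    {i : Fin n} (hi : f i.succ < f i.castSucc) :
    NiceStep (f⁻¹ * finRotate (n + 1) * f)
      ((f * swap i.castSucc i.succ)⁻¹ * finRotate (n + 1) * (f * swap i.castSucc i.succ)) := by
  refine ⟨i.castSucc, i.succ, by simp, fun hnext => ?_, by simp [mul_assoc]⟩
  have hrot : finRotate (n + 1) (f i.castSucc) = f i.succ := by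
    rwa [Perm.mul_apply, Perm.mul_apply, Perm.inv_eq_iff_eq] at hnext
  have hzero : f i.succ = f 0 := by
    rw [h0, ← hrot]
    exact finRotate_eq_zero_of_lt (hrot ▸ hi)
  exact Fin.succ_ne_zero i (f.injective hzero)

theorem reflTransGen_niceStep_conj_finRotate {n : ℕ} (f : Perm (Fin (n + 1))) (h0 : f 0 = 0) :
    ReflTransGen NiceStep (f⁻¹ * finRotate (n + 1) * f) (finRotate (n + 1)) := by
  induction f using (wellFounded_lt.onFun (f := fun f : Perm (Fin (n + 1)) ↦ toLex ⇑f)).induction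
    with | _ f ih =>
    by_cases hmono : Monotone f
    · simp [(Equiv.Perm.monotone_iff f).1 hmono, ReflTransGen.refl]
    obtain ⟨i, hi⟩ : ∃ i : Fin n, f i.succ < f i.castSucc := by
      simpa [Fin.monotone_iff_le_succ] using hmono
    have hi0 : i.castSucc ≠ 0 := fun h ↦ by simp [h, h0] at hi
    have hswap0 : swap i.castSucc i.succ 0 = 0 :=
      swap_apply_of_ne_of_ne hi0.symm (Fin.succ_ne_zero i).symm
    exact .head (niceStep_conj_finRotate_of_descent h0 hi)
      (ih _ (Pi.lex_desc Fin.castSucc_lt_succ.le hi) (by simp [hswap0, h0]))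

/-- Any single `d`-cycle can be transformed into the full forward cycle
`(1 2 … d)` by a finite sequence of nice Coxeter conjugations. -/
theorem cycle_to_canonical (d : ℕ) (π : Equiv.Perm (Fin d))
    (hc : π.IsCycle) (hs : π.support.card = d) :
    Relation.ReflTransGen NiceStep π (finRotate d) := by
  obtain ⟨n, rfl⟩ : ∃ n, d = n + 2 := ⟨d - 2, by have := hs ▸ hc.two_le_card_support; omega⟩
  have hconj : IsConj π (finRotate (n + 2)) :=
    hc.isConj isCycle_finRotate (by simp [hs, support_finRotate])
  obtain ⟨f, hf, hf0⟩ := hconj.exists_conj_eq_of_isCycle isCycle_finRotate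
    (fun x ↦ mem_support.1 (by simp [support_finRotate])) 0 0
  have hπ : π = f⁻¹ * finRotate (n + 2) * f := by rw [← hf]; group
  exact hπ ▸ reflTransGen_niceStep_conj_finRotate f hf0
end

section
/- In the universal enveloping algebra of gl_N(ℂ) with Z_{ij} = ℏe_{ij}, the element C_π^{(r)} := Σ_{i:[3]→[N]} (Z^{r})_{i(1)i(3)} Z_{i(2)i(1)} Z_{i(3)i(2)} (corresponding to the permutation π = (1 3 2) with exponents (r,1,1)) equals C_{r+2} + ℏ C_r C_1 − ℏ N C_{r+1}, where C_k := Tr Z^k = Σ_{i:[k]→[N]} Z_{i(1)i(2)}⋯Z_{i(k)i(1)}. -/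
attribute [local instance 100] LieRing.ofAssociativeRing

/-- The matrix `Z` with entries `Z_{ij} = ℏ e_{ij}` over the universal
enveloping algebra of `gl_N(ℂ)`. -/
noncomputable def ZM (N : ℕ) (h : ℂ) :
    Matrix (Fin N) (Fin N) (UniversalEnvelopingAlgebra ℂ (Matrix (Fin N) (Fin N) ℂ)) :=
  fun i j => h • UniversalEnvelopingAlgebra.ι ℂ (Matrix.single i j 1)

/-- The higher Casimir elements `C_k = Tr Z^k`. -/
noncomputable def Cas (N : ℕ) (h : ℂ) (k : ℕ) :
    UniversalEnvelopingAlgebra ℂ (Matrix (Fin N) (Fin N) ℂ) :=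
  (ZM N h ^ k).trace

/-! Swapping the last two factors of the summand turns it into the summand of `C_{r+2}`; the
commutator `[Z_{i₂i₁}, Z_{i₃i₂}] = ℏ (δ_{i₁i₃} Z_{i₂i₂} − Z_{i₃i₁})` then contributes `ℏ C_r C_1`,
and, since the index `i₂` becomes free, `−ℏ N C_{r+1}`. -/

open Matrix Finset

lemma Matrix.single_mul_single {n R : Type*} [Fintype n] [DecidableEq n] [Semiring R]
    (i j k l : n) (c d : R) :
    single i j c * single k l d = if j = k then single i l (c * d) else 0 := by
  split_ifs with hjk
  · rw [hjk, single_mul_single_same]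
  · exact single_mul_single_of_ne c i j k hjk d

section Casimir

variable (N : ℕ) (h : ℂ)

lemma ZM_mul_sub_mul (i j k l : Fin N) :
    ZM N h i j * ZM N h k l - ZM N h k l * ZM N h i j
      = h • ((if j = k then ZM N h i l else 0) - if l = i then ZM N h k j else 0) := by
  have hbracket := (UniversalEnvelopingAlgebra.ι ℂ).map_lie
    (single i j (1 : ℂ)) (single k l (1 : ℂ))
  rw [Ring.lie_def, Ring.lie_def, single_mul_single, single_mul_single, mul_one]
    at hbracket
  simp only [ZM, smul_mul_smul_comm, ← smul_sub, ← hbracket, map_sub]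
  split_ifs <;> simp [smul_sub, smul_smul]

lemma sum_mul_ZM_mul_ZM
    (A : Matrix (Fin N) (Fin N) (UniversalEnvelopingAlgebra ℂ (Matrix (Fin N) (Fin N) ℂ))) :
    ∑ i1 : Fin N, ∑ i2 : Fin N, ∑ i3 : Fin N, A i1 i3 * ZM N h i2 i1 * ZM N h i3 i2
      = (A * ZM N h * ZM N h).trace + h • (A.trace * (ZM N h).trace)
        - (h * N) • (A * ZM N h).trace := by
  have hswap : ∀ i1 i2 i3 : Fin N, ZM N h i2 i1 * ZM N h i3 i2
      = ZM N h i3 i2 * ZM N h i2 i1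
        + h • ((if i1 = i3 then ZM N h i2 i2 else 0) - ZM N h i3 i1) := by
    intro i1 i2 i3
    rw [← sub_eq_iff_eq_add', ZM_mul_sub_mul, if_pos rfl]
  simp only [mul_assoc, hswap, mul_add, mul_sub, mul_smul_comm, sum_add_distrib, sum_sub_distrib,
    mul_ite, mul_zero, sum_ite_eq, mem_univ, if_true, ← smul_sum, sum_const, card_univ,
    Fintype.card_fin]
  simp only [trace, diag_apply, mul_apply, sum_mul, mul_sum, mul_smul, smul_sub,
    Nat.cast_smul_eq_nsmul, add_sub_assoc]
  rw [sum_comm (s := univ) (t := univ) (f := fun i j => A i i * ZM N h j j)]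
  congr 1
  exact sum_congr rfl fun _ _ => sum_comm

end Casimir

theorem biasimir_132_general (N : ℕ) (h : ℂ) (r : ℕ) :
    (∑ i1 : Fin N, ∑ i2 : Fin N, ∑ i3 : Fin N,
        (ZM N h ^ r) i1 i3 * ZM N h i2 i1 * ZM N h i3 i2) =
      Cas N h (r + 2) + h • (Cas N h r * Cas N h 1) - (h * N) • Cas N h (r + 1) := by
  rw [sum_mul_ZM_mul_ZM, Cas, Cas, Cas, Cas, pow_one, pow_succ, pow_succ]

/-- The Biasimir for `π = (1 3 2)` with exponents `(r,1,1)`: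
`Σ_i (Z^r)_{i(1)i(3)} Z_{i(2)i(1)} Z_{i(3)i(2)} = C_{r+2} + ℏ C_r C_1 − ℏ N C_{r+1}`. -/
theorem biasimir_132 (N : ℕ) (h : ℂ) (r : ℕ) (hr : 1 ≤ r) :
    (∑ i1 : Fin N, ∑ i2 : Fin N, ∑ i3 : Fin N,
        (ZM N h ^ r) i1 i3 * ZM N h i2 i1 * ZM N h i3 i2) =
      Cas N h (r + 2) + h • (Cas N h r * Cas N h 1) - (h * N) • Cas N h (r + 1) :=
  biasimir_132_general N h r
end
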